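/- arXiv:1511.01636 — 2 statements merged into one kernel-verified Lean document; each statement's English description precedes it below -/
import Mathlib

section
/- Let G be a group, H a normal subgroup of finite index, and V_1, V_2 finite-dimensional representations of H over a field E. Then there is an isomorphism of G-representations: Ind_H^G V_1 ⊗ Ind_H^G V_2 ≅ ⊕_{σ ∈ G/H} Ind_H^G (V_1 ⊗ σ(V_2)), where σ(V_2) denotes the representation of H in which x ∈ H acts by the action of σ^{-1} x σ on V_2. -/
open scoped TensorProduct

variable {E : Type} [Field E] {G : Type} [Group G]

/-- The carrier of the induced representation `Ind_H^G V`: functions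
`f : G → V` with `f(h·g) = ρ(h)(f(g))`. -/
def IndCarrier (H : Subgroup G) {V : Type} [AddCommGroup V] [Module E V]
    (ρ : Representation E H V) : Submodule E (G → V) where
  carrier := {f | ∀ (h : H) (g : G), f ((h : G) * g) = ρ h (f g)}
  add_mem' := by
    intro f₁ f₂ h₁ h₂ h g
    simp [h₁ h g, h₂ h g]
  zero_mem' := by
    intro h g
    simp
  smul_mem' := by
    intro c f hf h g
    simp [hf h g]

/-- The induced representation `Ind_H^G ρ`, with `G` acting by right
translation. -/
noncomputable def IndRep (H : Subgroup G) {V : Type} [AddCommGroup V]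
    [Module E V] (ρ : Representation E H V) :
    Representation E G (IndCarrier (E := E) H ρ) where
  toFun g :=
    { toFun := fun f => ⟨fun x => (f : G → V) (x * g), fun h x => by
        simpa [mul_assoc] using f.2 h (x * g)⟩
      map_add' := fun f₁ f₂ => by ext x; rfl
      map_smul' := fun c f => by ext x; rfl }
  map_one' := by
    apply LinearMap.ext
    intro f
    apply Subtype.ext
    funext x
    simp
  map_mul' := fun g₁ g₂ => by
    apply LinearMap.ext
    intro f
    apply Subtype.ext
    funext x
    simp [mul_assoc]

/-- The conjugate representation `σ(V)`: `x ∈ H` acts through `σ⁻¹ x σ`. -/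
noncomputable def conjRep (H : Subgroup G) [H.Normal] {V : Type}
    [AddCommGroup V] [Module E V] (σ : G) (ρ : Representation E H V) :
    Representation E H V :=
  ρ.comp (MulAut.conjNormal (σ⁻¹ : G)).toMonoidHom

/-- The componentwise representation on a product of representations. -/
noncomputable def piRep {ι : Type} (W : ι → Type) [∀ i, AddCommGroup (W i)]
    [∀ i, Module E (W i)] (ρ : ∀ i, Representation E G (W i)) :
    Representation E G (∀ i, W i) where
  toFun g := LinearMap.pi fun i => (ρ i g).comp (LinearMap.proj i)
  map_one' := by
    apply LinearMap.ext
    intro v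
    funext i
    simp
  map_mul' := fun g₁ g₂ => by
    apply LinearMap.ext
    intro v
    funext i
    simp

/-! The map `f₁ ⊗ f₂ ↦ (σ ↦ (x ↦ f₁ x ⊗ f₂ (σ⁻¹ x)))` is `G`-equivariant because `G` acts on
both sides by right translation, and its `σ`-component lands in `Ind_H^G (V₁ ⊗ σ(V₂))` because
`σ⁻¹ h x = (σ⁻¹ h σ) σ⁻¹ x`. An induced function is determined by its values on coset
representatives, which yields a left inverse; both sides have dimension
`[G : H]² · dim V₁ · dim V₂`, so the map is an isomorphism. -/

namespace IndCarrier

variable {H : Subgroup G} {V : Type} [AddCommGroup V] [Module E V] {ρ : Representation E H V}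

theorem apply_mul (f : IndCarrier H ρ) (h : H) (g : G) :
    (f : G → V) (h * g) = ρ h ((f : G → V) g) :=
  f.2 h g

variable (ρ) in
noncomputable def lapply (x : G) : IndCarrier H ρ →ₗ[E] V :=
  LinearMap.proj x ∘ₗ (IndCarrier H ρ).subtype

variable [H.Normal]

theorem apply_inv_mul_mul (f : IndCarrier H ρ) (σ : G) (h : H) (x : G) :
    (f : G → V) (σ⁻¹ * (h * x)) = conjRep H σ ρ h ((f : G → V) (σ⁻¹ * x)) := by
  have hconj : σ⁻¹ * (h * x) = (MulAut.conjNormal σ⁻¹ h : G) * (σ⁻¹ * x) := by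
    rw [MulAut.conjNormal_apply]
    group
  rw [hconj, apply_mul]
  rfl

theorem apply_eq_of_mk_eq (f : IndCarrier H ρ) {g y : G} (hgy : (g : G ⧸ H) = y) :
    (f : G → V) g = ρ ⟨g / y, QuotientGroup.eq_iff_div_mem.mp hgy⟩ ((f : G → V) y) := by
  rw [← apply_mul]
  simp

variable (ρ) in
open Classical in
noncomputable def single (y : G) : V →ₗ[E] IndCarrier H ρ where
  toFun v := ⟨fun g => if hg : (g : G ⧸ H) = y then
      ρ ⟨g / y, QuotientGroup.eq_iff_div_mem.mp hg⟩ v else 0, by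
    intro h g
    have hmk : ((h * g : G) : G ⧸ H) = g := by
      rw [QuotientGroup.mk_mul, (QuotientGroup.eq_one_iff _).mpr h.2, one_mul]
    by_cases hg : (g : G ⧸ H) = y
    · simp only [hmk, hg, dif_pos, ← Module.End.mul_apply, ← map_mul]
      congr 3
      exact mul_div_assoc _ _ _
    · simp [hmk, hg]⟩
  map_add' v w := by
    refine Subtype.ext (funext fun g => ?_)
    by_cases hg : (g : G ⧸ H) = y <;> simp [hg]
  map_smul' c v := by
    refine Subtype.ext (funext fun g => ?_)
    by_cases hg : (g : G ⧸ H) = y <;> simp [hg]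

theorem single_apply_of_mk_eq (y : G) (v : V) {g : G} (hg : (g : G ⧸ H) = y) :
    (single ρ y v : G → V) g = ρ ⟨g / y, QuotientGroup.eq_iff_div_mem.mp hg⟩ v := by
  simp [single, hg]

theorem single_apply_of_mk_ne (y : G) (v : V) {g : G} (hg : (g : G ⧸ H) ≠ y) :
    (single ρ y v : G → V) g = 0 := by
  simp [single, hg]

theorem single_apply_self (y : G) (v : V) : (single ρ y v : G → V) y = v := by
  rw [single_apply_of_mk_eq y v rfl]
  simp only [div_self']
  exact LinearMap.congr_fun (map_one ρ) v

theorem sum_single [Fintype (G ⧸ H)] (y : G ⧸ H → G) (hy : ∀ t, (y t : G ⧸ H) = t)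
    (f : IndCarrier H ρ) : ∑ t, single ρ (y t) ((f : G → V) (y t)) = f := by
  ext g
  rw [Submodule.coe_sum, Finset.sum_apply, Finset.sum_eq_single (g : G ⧸ H)]
  · rw [single_apply_of_mk_eq _ _ (hy _).symm, ← apply_eq_of_mk_eq f (hy _).symm]
  · exact fun t _ ht => single_apply_of_mk_ne _ _ (by rw [hy]; exact Ne.symm ht)
  · simp

variable (ρ) in
noncomputable def equivFun [Fintype (G ⧸ H)] : IndCarrier H ρ ≃ₗ[E] (G ⧸ H → V) where
  toFun f t := (f : G → V) (Quotient.out t)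
  map_add' _ _ := rfl
  map_smul' _ _ := rfl
  invFun v := ∑ t, single ρ (Quotient.out t) (v t)
  left_inv f := sum_single _ (fun t => Quotient.out_eq t) f
  right_inv v := by
    funext t
    show ((∑ u : G ⧸ H, single ρ (Quotient.out u) (v u) : IndCarrier H ρ) : G → V)
      (Quotient.out t) = v t
    rw [Submodule.coe_sum, Finset.sum_apply, Fintype.sum_eq_single t]
    · exact single_apply_self _ _
    · exact fun u hut => single_apply_of_mk_ne _ _ (by simpa using hut.symm)

instance [Finite (G ⧸ H)] [FiniteDimensional E V] : FiniteDimensional E (IndCarrier H ρ) :=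
  have := Fintype.ofFinite (G ⧸ H)
  Module.Finite.equiv (equivFun ρ).symm

theorem finrank_eq [Fintype (G ⧸ H)] [FiniteDimensional E V] :
    Module.finrank E (IndCarrier H ρ) = Fintype.card (G ⧸ H) * Module.finrank E V := by
  simp [(equivFun ρ).finrank_eq, Module.finrank_pi_fintype]

end IndCarrier

section TensorInd

open IndCarrier TensorProduct

variable {H : Subgroup G} {V₁ V₂ : Type} [AddCommGroup V₁] [Module E V₁]
  [AddCommGroup V₂] [Module E V₂] (ρ₁ : Representation E H V₁) (ρ₂ : Representation E H V₂)
  [H.Normal]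

noncomputable def tensorIndToIndConj (σ : G) :
    IndCarrier H ρ₁ ⊗[E] IndCarrier H ρ₂ →ₗ[E] IndCarrier H (ρ₁.tprod (conjRep H σ ρ₂)) :=
  LinearMap.codRestrict _
    (LinearMap.pi fun x => map (lapply ρ₁ x) (lapply ρ₂ (σ⁻¹ * x)))
    fun v => by
      induction v using TensorProduct.induction_on with
      | zero => simp
      | tmul f₁ f₂ =>
        intro h x
        simp [lapply, apply_mul, apply_inv_mul_mul]
      | add v w hv hw => simpa using add_mem hv hw

theorem tensorIndToIndConj_tmul_apply (σ : G) (f₁ : IndCarrier H ρ₁) (f₂ : IndCarrier H ρ₂)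
    (x : G) :
    (tensorIndToIndConj ρ₁ ρ₂ σ (f₁ ⊗ₜ f₂) : G → V₁ ⊗[E] V₂) x =
      (f₁ : G → V₁) x ⊗ₜ (f₂ : G → V₂) (σ⁻¹ * x) :=
  rfl

theorem tensorIndToIndConj_comp_tprod (σ g : G) :
    tensorIndToIndConj ρ₁ ρ₂ σ ∘ₗ (IndRep H ρ₁).tprod (IndRep H ρ₂) g =
      IndRep H (ρ₁.tprod (conjRep H σ ρ₂)) g ∘ₗ tensorIndToIndConj ρ₁ ρ₂ σ :=
  TensorProduct.ext' fun f₁ f₂ => Subtype.ext <| funext fun x => by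
    simp [tensorIndToIndConj_tmul_apply, IndRep, mul_assoc]

noncomputable def tensorIndToPiInd :
    IndCarrier H ρ₁ ⊗[E] IndCarrier H ρ₂ →ₗ[E]
      ∀ s : G ⧸ H, IndCarrier H (ρ₁.tprod (conjRep H (Quotient.out s) ρ₂)) :=
  LinearMap.pi fun s => tensorIndToIndConj ρ₁ ρ₂ (Quotient.out s)

theorem tensorIndToPiInd_comp_tprod (g : G) :
    tensorIndToPiInd ρ₁ ρ₂ ∘ₗ (IndRep H ρ₁).tprod (IndRep H ρ₂) g =
      piRep _ (fun s : G ⧸ H => IndRep H (ρ₁.tprod (conjRep H (Quotient.out s) ρ₂))) g ∘ₗ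
        tensorIndToPiInd ρ₁ ρ₂ :=
  LinearMap.ext fun v => funext fun s =>
    LinearMap.congr_fun (tensorIndToIndConj_comp_tprod ρ₁ ρ₂ (Quotient.out s) g) v

theorem mk_inv_out_mul_out (t u : G ⧸ H) :
    (((Quotient.out (t * u⁻¹))⁻¹ * Quotient.out t : G) : G ⧸ H) = u := by
  simp

variable [Fintype (G ⧸ H)]

/-- Evaluating the component `t * u⁻¹` at `Quotient.out t` recovers the values of `f₁` on the
coset `t` tensored with those of `f₂` on the coset `u`. -/
noncomputable def piIndToTensorInd :
    (∀ s : G ⧸ H, IndCarrier H (ρ₁.tprod (conjRep H (Quotient.out s) ρ₂))) →ₗ[E]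
      IndCarrier H ρ₁ ⊗[E] IndCarrier H ρ₂ :=
  ∑ t : G ⧸ H, ∑ u : G ⧸ H,
    map (single ρ₁ (Quotient.out t)) (single ρ₂ ((Quotient.out (t * u⁻¹))⁻¹ * Quotient.out t)) ∘ₗ
      lapply _ (Quotient.out t) ∘ₗ LinearMap.proj (t * u⁻¹)

theorem piIndToTensorInd_comp_tensorIndToPiInd :
    piIndToTensorInd ρ₁ ρ₂ ∘ₗ tensorIndToPiInd ρ₁ ρ₂ = LinearMap.id := by
  refine TensorProduct.ext' fun f₁ f₂ => ?_
  calc piIndToTensorInd ρ₁ ρ₂ (tensorIndToPiInd ρ₁ ρ₂ (f₁ ⊗ₜ f₂))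
      = ∑ t : G ⧸ H, single ρ₁ (Quotient.out t) ((f₁ : G → V₁) (Quotient.out t)) ⊗ₜ
          ∑ u : G ⧸ H, single ρ₂ ((Quotient.out (t * u⁻¹))⁻¹ * Quotient.out t)
            ((f₂ : G → V₂) ((Quotient.out (t * u⁻¹))⁻¹ * Quotient.out t)) := by
        simp only [piIndToTensorInd, LinearMap.sum_apply, tmul_sum]
        rfl
    _ = f₁ ⊗ₜ f₂ := by
        simp only [sum_single _ (mk_inv_out_mul_out _), ← sum_tmul]
        rw [sum_single _ Quotient.out_eq]

theorem finrank_tensorInd_eq_finrank_piInd [FiniteDimensional E V₁] [FiniteDimensional E V₂] :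
    Module.finrank E (IndCarrier H ρ₁ ⊗[E] IndCarrier H ρ₂) =
      Module.finrank E (∀ s : G ⧸ H, IndCarrier H (ρ₁.tprod (conjRep H (Quotient.out s) ρ₂))) := by
  simp only [Module.finrank_tensorProduct, Module.finrank_pi_fintype, IndCarrier.finrank_eq,
    Finset.sum_const, Finset.card_univ, smul_eq_mul]
  ring

theorem tensorIndToPiInd_injective : Function.Injective (tensorIndToPiInd ρ₁ ρ₂) :=
  Function.LeftInverse.injective (g := piIndToTensorInd ρ₁ ρ₂)
    (LinearMap.congr_fun (piIndToTensorInd_comp_tensorIndToPiInd ρ₁ ρ₂))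

noncomputable def tensorIndEquivPiInd [FiniteDimensional E V₁] [FiniteDimensional E V₂] :
    IndCarrier H ρ₁ ⊗[E] IndCarrier H ρ₂ ≃ₗ[E]
      ∀ s : G ⧸ H, IndCarrier H (ρ₁.tprod (conjRep H (Quotient.out s) ρ₂)) :=
  LinearMap.linearEquivOfInjective (V := IndCarrier H ρ₁ ⊗[E] IndCarrier H ρ₂)
    (tensorIndToPiInd ρ₁ ρ₂) (tensorIndToPiInd_injective ρ₁ ρ₂)
    (finrank_tensorInd_eq_finrank_piInd ρ₁ ρ₂)

end TensorInd

/-- Mackey-type formula for a tensor product of two induced representations: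
`Ind_H^G V₁ ⊗ Ind_H^G V₂ ≅ ⊕_{σ ∈ G/H} Ind_H^G (V₁ ⊗ σ(V₂))` as
representations of `G`. -/
theorem ind_tensor_ind_iso (H : Subgroup G) [H.Normal] [H.FiniteIndex]
    {V₁ V₂ : Type} [AddCommGroup V₁] [Module E V₁] [AddCommGroup V₂]
    [Module E V₂] [FiniteDimensional E V₁] [FiniteDimensional E V₂]
    (ρ₁ : Representation E H V₁) (ρ₂ : Representation E H V₂) :
    ∃ e : (IndCarrier (E := E) H ρ₁ ⊗[E] IndCarrier (E := E) H ρ₂) ≃ₗ[E]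
        (∀ s : G ⧸ H,
          IndCarrier (E := E) H (ρ₁.tprod (conjRep H (Quotient.out s) ρ₂))),
      ∀ (g : G) (v),
        e (((IndRep H ρ₁).tprod (IndRep H ρ₂)) g v) =
          (piRep _ (fun s : G ⧸ H =>
            IndRep H (ρ₁.tprod (conjRep H (Quotient.out s) ρ₂)))) g (e v) := by
  have := Fintype.ofFinite (G ⧸ H)
  exact ⟨tensorIndEquivPiInd ρ₁ ρ₂,
    fun g => LinearMap.congr_fun (tensorIndToPiInd_comp_tprod ρ₁ ρ₂ g)⟩
end

section
/- Let k ≥ 2 and let μ_k ⊂ ℂ be the group of k-th roots of unity. Let T_k be the multiset of all sums ζ_1 + ζ_2 − ζ_3 − ζ_4 with ζ_1, ζ_2, ζ_3, ζ_4 ∈ μ_k. Then the group of complex numbers μ with μ·T_k = T_k (as multisets) equals μ_k if k is even, and equals μ_{2k} if k is odd. -/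
/-!
Scaling a multiset by `μ` multiplies its `n`-th power sum by `μ ^ n`, so a symmetry `μ` of `T_k`
satisfies `μ ^ n = 1` as soon as the `n`-th power sum of `T_k` is non-zero. Write `T_k = D - D`
with `D = μ_k + μ_k`. The power sums of `μ_k` are `k` or `0` according as `k` divides the
exponent or not, so two binomial expansions give `∑ t ^ k = 4 k⁴` for even `k` and
`∑ t ^ (2k) = (4 - 2 C(2k, k)) k⁴` for odd `k`, and `C(2k, k) > 2` once `k ≥ 2`.
Conversely `T_k` is invariant under multiplication by `μ_k` and, exchanging `(ζ₁, ζ₂)` with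
`(ζ₃, ζ₄)`, under negation; for odd `k` these together generate `μ_{2k}`.
-/

/-- The multiset `T_k` of all sums `ζ₁ + ζ₂ − ζ₃ − ζ₄` with `ζᵢ` ranging over
the `k`-th roots of unity in `ℂ`. -/
noncomputable def Tk (k : ℕ) : Multiset ℂ :=
  Multiset.map (fun p => p.1.1 + p.1.2 - p.2.1 - p.2.2)
    (Multiset.product
      (Multiset.product (Polynomial.nthRoots k (1 : ℂ))
        (Polynomial.nthRoots k (1 : ℂ)))
      (Multiset.product (Polynomial.nthRoots k (1 : ℂ))
        (Polynomial.nthRoots k (1 : ℂ))))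

open Polynomial

namespace Multiset

section Product

variable {α β γ δ : Type*}

theorem map_prodMap_product (f : α → γ) (g : β → δ) (s : Multiset α) (t : Multiset β) :
    (s ×ˢ t).map (Prod.map f g) = s.map f ×ˢ t.map g := by
  induction s using Multiset.induction <;> simp_all [cons_product, map_map]

theorem map_map_product_of_map_op {f : α → α} {op : α → α → α}
    (hf : ∀ x y, f (op x y) = op (f x) (f y)) (s t : Multiset α) :
    ((s ×ˢ t).map fun p => op p.1 p.2).map f = (s.map f ×ˢ t.map f).map fun p => op p.1 p.2 := by
  rw [← map_prodMap_product, map_map, map_map]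
  exact map_congr rfl fun p _ => hf p.1 p.2

end Product

section PowerSum

variable {α β R : Type*} [CommSemiring R]

theorem sum_map_mul_product (s : Multiset α) (t : Multiset β) (f : α → R) (g : β → R) :
    ((s ×ˢ t).map fun p => f p.1 * g p.2).sum = (s.map f).sum * (t.map g).sum := by
  induction s using Multiset.induction <;> simp_all [cons_product, add_mul, sum_map_mul_left]

def powerSum (s : Multiset R) (n : ℕ) : R := (s.map (· ^ n)).sum

theorem powerSum_map_mul (c : R) (s : Multiset R) (n : ℕ) :
    (s.map (c * ·)).powerSum n = c ^ n * s.powerSum n := by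
  simp [powerSum, map_map, mul_pow, sum_map_mul_left]

theorem powerSum_map_add_product (s t : Multiset R) (n : ℕ) :
    ((s ×ˢ t).map fun p => p.1 + p.2).powerSum n =
      ∑ i ∈ Finset.range (n + 1), s.powerSum i * t.powerSum (n - i) * n.choose i := by
  simp only [powerSum, map_map, Function.comp_def, add_pow, sum_map_sum, sum_map_mul_right]
  exact Finset.sum_congr rfl fun i _ => by
    rw [sum_map_mul_product s t (· ^ i) (· ^ (n - i))]

theorem pow_eq_one_of_map_mul_eq_self [IsDomain R] {s : Multiset R} {μ : R}
    (h : s.map (μ * ·) = s) {n : ℕ} (hn : s.powerSum n ≠ 0) : μ ^ n = 1 := by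
  have h' := congrArg (powerSum · n) h
  simp only [powerSum_map_mul] at h'
  exact mul_right_cancel₀ hn (h'.trans (one_mul _).symm)

end PowerSum

theorem powerSum_map_sub_product {R : Type*} [CommRing R] (s t : Multiset R) (n : ℕ) :
    ((s ×ˢ t).map fun p => p.1 - p.2).powerSum n =
      ∑ i ∈ Finset.range (n + 1),
        (-1) ^ (n - i) * s.powerSum i * t.powerSum (n - i) * n.choose i := by
  have hneg : (s ×ˢ t).map (fun p => p.1 - p.2) =
      (s.map id ×ˢ t.map (-1 * ·)).map fun p => p.1 + p.2 := by
    rw [← map_prodMap_product, map_map]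
    exact map_congr rfl fun p _ => by simp [sub_eq_add_neg]
  rw [hneg, map_id, powerSum_map_add_product]
  simp only [powerSum_map_mul]
  exact Finset.sum_congr rfl fun i _ => by ring

end Multiset

theorem Finset.sum_range_mul_add_one_of_not_dvd {M : Type*} [AddCommMonoid M] {k : ℕ}
    (hk : k ≠ 0) (c : ℕ) {f : ℕ → M} (hf : ∀ i, ¬ k ∣ i → f i = 0) :
    ∑ i ∈ range (k * c + 1), f i = ∑ j ∈ range (c + 1), f (k * j) := by
  have hk' : 0 < k := Nat.pos_of_ne_zero hk
  have himage : (range (c + 1)).image (k * ·) ⊆ range (k * c + 1) := by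
    simp only [subset_iff, mem_image, mem_range, forall_exists_index, and_imp]
    rintro _ j hj rfl
    nlinarith
  rw [← sum_image fun _ _ _ _ h => Nat.eq_of_mul_eq_mul_left hk' h]
  refine (sum_subset himage fun i hi hi' => hf i ?_).symm
  rintro ⟨j, rfl⟩
  simp only [mem_image, mem_range, not_exists, not_and] at hi hi'
  exact hi' j (by nlinarith) rfl

namespace IsPrimitiveRoot

variable {R : Type*} [CommRing R] [IsDomain R] {k : ℕ} {ζ : R}

theorem map_mul_nthRoots_one (hζ : IsPrimitiveRoot ζ k) {ν : R} (hν : ν ^ k = 1) :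
    (nthRoots k (1 : R)).map (ν * ·) = nthRoots k 1 := by
  conv_rhs => rw [hζ.nthRoots_eq hν]
  rw [hζ.nthRoots_eq (one_pow k), Multiset.map_map]
  exact Multiset.map_congr rfl fun j _ => by simp [mul_comm]

theorem powerSum_nthRoots_one (hζ : IsPrimitiveRoot ζ k) (a : ℕ) :
    (nthRoots k (1 : R)).powerSum a = if k ∣ a then (k : R) else 0 := by
  have hsum : (nthRoots k (1 : R)).powerSum a = ∑ j ∈ Finset.range k, (ζ ^ a) ^ j := by
    simp [Multiset.powerSum, hζ.nthRoots_eq (one_pow k), Finset.sum_eq_multiset_sum, ← pow_mul,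
      mul_comm]
  split_ifs with h
  · simp [hsum, (hζ.pow_eq_one_iff_dvd a).2 h]
  · have hne : ζ ^ a - 1 ≠ 0 := sub_ne_zero.2 fun h' => h ((hζ.pow_eq_one_iff_dvd a).1 h')
    have hgeom := geom_sum_mul (ζ ^ a) k
    rw [pow_right_comm, hζ.pow_eq_one, one_pow, sub_self] at hgeom
    rw [hsum]
    exact (mul_eq_zero.1 hgeom).resolve_right hne

end IsPrimitiveRoot

open Multiset

noncomputable def pairSums (k : ℕ) : Multiset ℂ :=
  (nthRoots k (1 : ℂ) ×ˢ nthRoots k (1 : ℂ)).map fun p => p.1 + p.2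

theorem Tk_eq_map_sub_product (k : ℕ) :
    Tk k = (pairSums k ×ˢ pairSums k).map fun p => p.1 - p.2 := by
  rw [pairSums, ← map_prodMap_product, map_map]
  exact map_congr rfl fun p _ => by
    simp only [Function.comp_apply, Prod.map_fst, Prod.map_snd]
    ring

section Symmetries

variable {k : ℕ} {ζ : ℂ}

theorem map_mul_Tk_of_pow_eq_one (hζ : IsPrimitiveRoot ζ k) {ν : ℂ} (hν : ν ^ k = 1) :
    (Tk k).map (ν * ·) = Tk k := by
  have hpair : (pairSums k).map (ν * ·) = pairSums k := by
    rw [pairSums, map_map_product_of_map_op fun x y => mul_add ν x y,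
      hζ.map_mul_nthRoots_one hν]
  rw [Tk_eq_map_sub_product, map_map_product_of_map_op fun x y => mul_sub ν x y, hpair]

theorem map_neg_Tk (k : ℕ) : (Tk k).map Neg.neg = Tk k := by
  conv_rhs => rw [Tk_eq_map_sub_product, ← map_swap_product, map_map]
  rw [Tk_eq_map_sub_product, map_map]
  exact map_congr rfl fun p _ => neg_sub p.1 p.2

theorem map_mul_Tk_of_odd (hζ : IsPrimitiveRoot ζ k) (hk : Odd k) {ν : ℂ}
    (hν : ν ^ (2 * k) = 1) : (Tk k).map (ν * ·) = Tk k := by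
  rw [pow_mul', sq_eq_one_iff] at hν
  rcases hν with hν | hν
  · exact map_mul_Tk_of_pow_eq_one hζ hν
  · have hνneg : (-ν) ^ k = 1 := by rw [hk.neg_pow, hν, neg_neg]
    calc (Tk k).map (ν * ·) = ((Tk k).map ((-ν) * ·)).map Neg.neg := by
          rw [map_map]; exact map_congr rfl fun z _ => by simp
      _ = Tk k := by rw [map_mul_Tk_of_pow_eq_one hζ hνneg, map_neg_Tk]

end Symmetries

section PowerSums

variable {k : ℕ} {ζ : ℂ}

theorem powerSum_pairSums_of_not_dvd (hζ : IsPrimitiveRoot ζ k) {m : ℕ} (hm : ¬ k ∣ m) :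
    (pairSums k).powerSum m = 0 := by
  rw [pairSums, powerSum_map_add_product]
  refine Finset.sum_eq_zero fun i hi => ?_
  simp only [hζ.powerSum_nthRoots_one]
  by_cases hi' : k ∣ i
  · have : ¬ k ∣ m - i := fun h => hm <| by
      simpa [Nat.add_sub_cancel' (Nat.lt_succ_iff.mp (Finset.mem_range.mp hi))] using dvd_add hi' h
    simp [this]
  · simp [hi']

theorem powerSum_pairSums_mul (hζ : IsPrimitiveRoot ζ k) (hk : k ≠ 0) (c : ℕ) :
    (pairSums k).powerSum (k * c) =
      k ^ 2 * ∑ j ∈ Finset.range (c + 1), ((k * c).choose (k * j) : ℂ) := by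
  rw [pairSums, powerSum_map_add_product, Finset.sum_range_mul_add_one_of_not_dvd hk,
    Finset.mul_sum]
  · refine Finset.sum_congr rfl fun j _ => ?_
    rw [← Nat.mul_sub, hζ.powerSum_nthRoots_one, hζ.powerSum_nthRoots_one,
      if_pos (dvd_mul_right k j), if_pos (dvd_mul_right _ _)]
    ring
  · intro i hi
    rw [hζ.powerSum_nthRoots_one, if_neg hi, zero_mul, zero_mul]

theorem powerSum_Tk_mul (hζ : IsPrimitiveRoot ζ k) (hk : k ≠ 0) (c : ℕ) :
    (Tk k).powerSum (k * c) = ∑ j ∈ Finset.range (c + 1), (-1) ^ (k * (c - j)) *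
      (pairSums k).powerSum (k * j) * (pairSums k).powerSum (k * (c - j)) *
        ((k * c).choose (k * j) : ℂ) := by
  rw [Tk_eq_map_sub_product, powerSum_map_sub_product,
    Finset.sum_range_mul_add_one_of_not_dvd hk]
  · simp only [← Nat.mul_sub]
  · intro i hi
    rw [powerSum_pairSums_of_not_dvd hζ hi, mul_zero, zero_mul, zero_mul]

theorem powerSum_Tk_of_even (hζ : IsPrimitiveRoot ζ k) (hk : k ≠ 0) (he : Even k) :
    (Tk k).powerSum k = 4 * k ^ 4 := by
  have h := powerSum_Tk_mul hζ hk 1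
  simp only [Finset.sum_range_succ, Finset.range_zero, Finset.sum_empty,
    powerSum_pairSums_mul hζ hk, mul_zero, mul_one, Nat.sub_zero, Nat.sub_self,
    Nat.choose_zero_right, Nat.choose_self, he.neg_one_pow, pow_zero, Nat.cast_one] at h
  linear_combination h

theorem powerSum_Tk_of_odd (hζ : IsPrimitiveRoot ζ k) (hk : k ≠ 0) (ho : Odd k) :
    (Tk k).powerSum (2 * k) = (4 - 2 * (2 * k).choose k) * k ^ 4 := by
  have h := powerSum_Tk_mul hζ hk 2
  simp only [Finset.sum_range_succ, Finset.range_zero, Finset.sum_empty,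
    powerSum_pairSums_mul hζ hk, mul_zero, mul_one, Nat.sub_zero, Nat.sub_self,
    Nat.choose_zero_right, Nat.choose_self, Nat.add_one_sub_one, ho.neg_one_pow,
    (even_two.mul_left k).neg_one_pow, Nat.cast_one, pow_zero] at h
  rw [mul_comm 2 k]
  linear_combination h

theorem powerSum_Tk_ne_zero (hζ : IsPrimitiveRoot ζ k) (hk : 2 ≤ k) :
    (Tk k).powerSum (if Even k then k else 2 * k) ≠ 0 := by
  have hk0 : (k : ℂ) ≠ 0 := by exact_mod_cast (by omega : k ≠ 0)
  split_ifs with he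
  · rw [powerSum_Tk_of_even hζ (by omega) he]
    exact mul_ne_zero (by norm_num) (pow_ne_zero 4 hk0)
  · rw [powerSum_Tk_of_odd hζ (by omega) (Nat.not_even_iff_odd.1 he)]
    refine mul_ne_zero (fun h => ?_) (pow_ne_zero 4 hk0)
    have h2 : (2 * k).choose k = 2 := by
      rw [← Nat.cast_inj (R := ℂ)]
      linear_combination -h / 2
    have := Nat.centralBinom_strictMono (by omega : 1 < k)
    simp [Nat.centralBinom_eq_two_mul_choose, h2] at this

end PowerSums

/-- The group of `μ ∈ ℂ` with `μ·T_k = T_k` (as multisets) equals `μ_k` if `k`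
is even and `μ_{2k}` if `k` is odd. -/
theorem symmetry_group_of_Tk (k : ℕ) (hk : 2 ≤ k) (μ : ℂ) :
    (Tk k).map (fun z => μ * z) = Tk k ↔
      μ ^ (if Even k then k else 2 * k) = 1 := by
  obtain ⟨ζ, hζ⟩ : ∃ ζ : ℂ, IsPrimitiveRoot ζ k := ⟨_, Complex.isPrimitiveRoot_exp k (by omega)⟩
  refine ⟨fun h => pow_eq_one_of_map_mul_eq_self h (powerSum_Tk_ne_zero hζ hk), fun h => ?_⟩
  split_ifs at h with he
  · exact map_mul_Tk_of_pow_eq_one hζ h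
  · exact map_mul_Tk_of_odd hζ (Nat.not_even_iff_odd.1 he) h
end
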